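/- The diagonal form in the Lorentz singular value decomposition is unique: if L1 · diag(s0,s1,s2,s3) · L2ᵀ = L1' · diag(s0',s1',s2',s3') · L2'ᵀ where L1, L2, L1', L2' are proper orthochronous Lorentz matrices, s0 ≥ s1 ≥ s2 ≥ |s3| and s0' ≥ s1' ≥ s2' ≥ |s3'|, then s_i = s_i' for all i ∈ {0,1,2,3}. -/

import Mathlib

open Matrix

noncomputable section

/-- The Minkowski metric η = diag(1,-1,-1,-1). -/
def η : Matrix (Fin 4) (Fin 4) ℝ := Matrix.diagonal ![1, -1, -1, -1]

/-- A proper orthochronous Lorentz matrix. -/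
def LorentzPO (L : Matrix (Fin 4) (Fin 4) ℝ) : Prop :=
  Lᵀ * η * L = η ∧ L.det = 1 ∧ 1 ≤ L 0 0

set_option maxHeartbeats 1000000

lemma eta_mul_eta : η * η = 1 := by
  ext i j
  fin_cases i <;> fin_cases j <;>
    simp [η, Matrix.mul_apply, Fin.sum_univ_four, Matrix.one_apply]

lemma diag_eta_diag (s : Fin 4 → ℝ) :
    Matrix.diagonal s * η * Matrix.diagonal s = η * Matrix.diagonal (fun i => s i * s i) := by
  rw [η, Matrix.diagonal_mul_diagonal, Matrix.diagonal_mul_diagonal, Matrix.diagonal_mul_diagonal]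
  funext i
  simp [mul_comm, mul_assoc, mul_left_comm]

lemma sorted4 {a b c d : ℝ} (h1 : b ≤ a) (h2 : c ≤ b) (h3 : d ≤ c) :
    List.Pairwise (fun x y : ℝ => y ≤ x) [a, b, c, d] := by
  simp only [List.pairwise_cons, List.mem_cons, List.mem_singleton, List.not_mem_nil,
    List.Pairwise.nil, and_true, forall_eq_or_imp, forall_eq, List.not_mem_nil,
    false_implies, implies_true]
  exact ⟨⟨h1, h2.trans h1, h3.trans (h2.trans h1)⟩, ⟨h2, h3.trans h2⟩, h3⟩

lemma key_conj (L1 L2 : Matrix (Fin 4) (Fin 4) ℝ) (hL1 : LorentzPO L1) (hL2 : LorentzPO L2)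
    (s : Fin 4 → ℝ) :
    η * (L1 * Matrix.diagonal s * L2ᵀ)ᵀ * η * (L1 * Matrix.diagonal s * L2ᵀ)
      = (L2ᵀ)⁻¹ * Matrix.diagonal (fun i => s i * s i) * L2ᵀ := by
  have hinv : (L2ᵀ)⁻¹ = η * L2 * η := by
    apply Matrix.inv_eq_right_inv
    calc L2ᵀ * (η * L2 * η) = (L2ᵀ * η * L2) * η := by noncomm_ring
    _ = 1 := by rw [hL2.1, eta_mul_eta]
  have h1 : (L1 * Matrix.diagonal s * L2ᵀ)ᵀ = L2 * Matrix.diagonal s * L1ᵀ := by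
    simp [Matrix.transpose_mul, Matrix.diagonal_transpose, mul_assoc]
  rw [h1, hinv]
  calc η * (L2 * Matrix.diagonal s * L1ᵀ) * η * (L1 * Matrix.diagonal s * L2ᵀ)
      = η * L2 * (Matrix.diagonal s * (L1ᵀ * η * L1) * Matrix.diagonal s) * L2ᵀ := by
        noncomm_ring
    _ = η * L2 * (Matrix.diagonal s * η * Matrix.diagonal s) * L2ᵀ := by rw [hL1.1]
    _ = η * L2 * η * Matrix.diagonal (fun i => s i * s i) * L2ᵀ := by
        rw [diag_eta_diag]; noncomm_ring

theorem lorentz_singular_values_unique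
    (L1 L2 L1' L2' : Matrix (Fin 4) (Fin 4) ℝ)
    (hL1 : LorentzPO L1) (hL2 : LorentzPO L2)
    (hL1' : LorentzPO L1') (hL2' : LorentzPO L2')
    (s s' : Fin 4 → ℝ)
    (hs : s 1 ≤ s 0 ∧ s 2 ≤ s 1 ∧ |s 3| ≤ s 2)
    (hs' : s' 1 ≤ s' 0 ∧ s' 2 ≤ s' 1 ∧ |s' 3| ≤ s' 2)
    (heq : L1 * Matrix.diagonal s * L2ᵀ = L1' * Matrix.diagonal s' * L2'ᵀ) :
    ∀ i : Fin 4, s i = s' i := by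
  -- nonnegativity
  have h3 : (0:ℝ) ≤ |s 3| := abs_nonneg _
  have h3' : (0:ℝ) ≤ |s' 3| := abs_nonneg _
  have hs2 : 0 ≤ s 2 := le_trans h3 hs.2.2
  have hs1 : 0 ≤ s 1 := le_trans hs2 hs.2.1
  have hs0 : 0 ≤ s 0 := le_trans hs1 hs.1
  have hs2' : 0 ≤ s' 2 := le_trans h3' hs'.2.2
  have hs1' : 0 ≤ s' 1 := le_trans hs2' hs'.2.1
  have hs0' : 0 ≤ s' 0 := le_trans hs1' hs'.1
  -- invertibility of L2ᵀ, L2'ᵀ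
  have hU : IsUnit (L2ᵀ) := by
    rw [Matrix.isUnit_iff_isUnit_det, Matrix.det_transpose, hL2.2.1]; exact isUnit_one
  have hU' : IsUnit (L2'ᵀ) := by
    rw [Matrix.isUnit_iff_isUnit_det, Matrix.det_transpose, hL2'.2.1]; exact isUnit_one
  -- conjugation identity
  have hconj : (L2ᵀ)⁻¹ * Matrix.diagonal (fun i => s i * s i) * L2ᵀ
      = (L2'ᵀ)⁻¹ * Matrix.diagonal (fun i => s' i * s' i) * L2'ᵀ := by
    rw [← key_conj L1 L2 hL1 hL2 s, ← key_conj L1' L2' hL1' hL2' s', heq]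
  -- equality of characteristic determinants
  have hdet : ∀ t : ℝ, (∏ i, (s i * s i - t)) = (∏ i, (s' i * s' i - t)) := by
    intro t
    have e1 : ∀ (P : Matrix (Fin 4) (Fin 4) ℝ) (v : Fin 4 → ℝ), IsUnit P →
        (P⁻¹ * Matrix.diagonal v * P - t • 1).det = ∏ i, (v i - t) := by
      intro P v hP
      have h1 : P⁻¹ * Matrix.diagonal v * P - t • 1
          = P⁻¹ * (Matrix.diagonal v - t • 1) * P := by
        rw [Matrix.mul_sub, Matrix.sub_mul]
        congr 1
        rw [Matrix.mul_smul, Matrix.mul_one, Matrix.smul_mul, Matrix.nonsing_inv_mul _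
          (by rwa [← Matrix.isUnit_iff_isUnit_det])]
      rw [h1, Matrix.det_conj' hP]
      have h2 : Matrix.diagonal v - t • (1 : Matrix (Fin 4) (Fin 4) ℝ)
          = Matrix.diagonal (fun i => v i - t) := by
        rw [Matrix.smul_one_eq_diagonal, Matrix.diagonal_sub]
      rw [h2, Matrix.det_diagonal]
    have := congrArg (fun A => (A - t • (1 : Matrix (Fin 4) (Fin 4) ℝ)).det) hconj
    simpa only [e1 _ _ hU, e1 _ _ hU'] using this
  -- polynomial identity and multiset of roots
  have hms : ({s 0 * s 0, s 1 * s 1, s 2 * s 2, s 3 * s 3} : Multiset ℝ)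
      = {s' 0 * s' 0, s' 1 * s' 1, s' 2 * s' 2, s' 3 * s' 3} := by
    have hpoly : ((({s 0 * s 0, s 1 * s 1, s 2 * s 2, s 3 * s 3} : Multiset ℝ)).map
          (fun a => Polynomial.X - Polynomial.C a)).prod
        = ((({s' 0 * s' 0, s' 1 * s' 1, s' 2 * s' 2, s' 3 * s' 3} : Multiset ℝ)).map
          (fun a => Polynomial.X - Polynomial.C a)).prod := by
      apply Polynomial.funext
      intro t
      have ht := hdet t
      rw [Fin.prod_univ_four, Fin.prod_univ_four] at ht
      simp only [Multiset.insert_eq_cons, Multiset.map_cons, Multiset.map_singleton,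
        Multiset.prod_cons, Multiset.prod_singleton, Polynomial.eval_mul, Polynomial.eval_sub,
        Polynomial.eval_X, Polynomial.eval_C]
      nlinarith [ht]
    have := congrArg Polynomial.roots hpoly
    rwa [Polynomial.roots_multiset_prod_X_sub_C, Polynomial.roots_multiset_prod_X_sub_C] at this
  -- squared inequalities
  have ha01 : s 1 * s 1 ≤ s 0 * s 0 := mul_self_le_mul_self hs1 hs.1
  have ha12 : s 2 * s 2 ≤ s 1 * s 1 := mul_self_le_mul_self hs2 hs.2.1
  have ha23 : s 3 * s 3 ≤ s 2 * s 2 := by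
    have h := mul_self_le_mul_self (abs_nonneg (s 3)) hs.2.2
    rwa [abs_mul_abs_self] at h
  have hb01 : s' 1 * s' 1 ≤ s' 0 * s' 0 := mul_self_le_mul_self hs1' hs'.1
  have hb12 : s' 2 * s' 2 ≤ s' 1 * s' 1 := mul_self_le_mul_self hs2' hs'.2.1
  have hb23 : s' 3 * s' 3 ≤ s' 2 * s' 2 := by
    have h := mul_self_le_mul_self (abs_nonneg (s' 3)) hs'.2.2
    rwa [abs_mul_abs_self] at h
  -- from multiset equality to sorted list equality
  have hlist : [s 0 * s 0, s 1 * s 1, s 2 * s 2, s 3 * s 3]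
      = [s' 0 * s' 0, s' 1 * s' 1, s' 2 * s' 2, s' 3 * s' 3] := by
    apply fun hp h1 h2 => List.Perm.eq_of_pairwise (le := fun a b : ℝ => b ≤ a) (fun _ _ _ _ h h' => le_antisymm h' h) h1 h2 hp
    · exact Multiset.coe_eq_coe.mp hms
    · exact sorted4 ha01 ha12 ha23
    · exact sorted4 hb01 hb12 hb23
  have e0 : s 0 * s 0 = s' 0 * s' 0 := by
    have h := hlist; simp only [List.cons.injEq] at h; exact h.1
  have e1 : s 1 * s 1 = s' 1 * s' 1 := by
    have h := hlist; simp only [List.cons.injEq] at h; exact h.2.1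
  have e2 : s 2 * s 2 = s' 2 * s' 2 := by
    have h := hlist; simp only [List.cons.injEq] at h; exact h.2.2.1
  have E0 : s 0 = s' 0 := by nlinarith
  have E1 : s 1 = s' 1 := by nlinarith
  have E2 : s 2 = s' 2 := by nlinarith
  -- determinant condition for sign of s 3
  have hdetM : s 0 * s 1 * s 2 * s 3 = s' 0 * s' 1 * s' 2 * s' 3 := by
    have h := congrArg Matrix.det heq
    rw [Matrix.det_mul, Matrix.det_mul, Matrix.det_mul, Matrix.det_mul,
      Matrix.det_transpose, Matrix.det_transpose, hL1.2.1, hL2.2.1, hL1'.2.1, hL2'.2.1,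
      Matrix.det_diagonal, Matrix.det_diagonal, Fin.prod_univ_four, Fin.prod_univ_four] at h
    simpa using h
  have E3 : s 3 = s' 3 := by
    rcases eq_or_lt_of_le hs2 with h2z | h2pos
    · have hz : s 3 = 0 := by
        have h : |s 3| ≤ 0 := by rw [← h2z] at hs; exact hs.2.2
        simpa [abs_nonpos_iff] using h
      have hz' : s' 3 = 0 := by
        have h : |s' 3| ≤ 0 := by
          calc |s' 3| ≤ s' 2 := hs'.2.2
          _ = s 2 := E2.symm
          _ = 0 := h2z.symm
        simpa [abs_nonpos_iff] using h
      rw [hz, hz']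
    · have h1pos : 0 < s 1 := lt_of_lt_of_le h2pos hs.2.1
      have h0pos : 0 < s 0 := lt_of_lt_of_le h1pos hs.1
      rw [E0, E1, E2] at hdetM
      have hprod : 0 < s' 0 * s' 1 * s' 2 := by
        rw [← E0, ← E1, ← E2]; positivity
      exact mul_left_cancel₀ (ne_of_gt hprod) hdetM
  intro i
  fin_cases i <;> assumption
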